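/- arXiv:2010.10130 — 7 statements merged into one kernel-verified Lean document; each statement's English description precedes it below -/
import Mathlib

section
/- For an invertible positive bounded operator x on a Hilbert space, Δ(x) = Δ(x⁻¹). -/
/-!
If `t = ‖1 - c • x‖ < 1` for a positive invertible `x` and `c > 0`, the spectrum of `c • x` lies in
`[1 - t, 1 + t]`. The map `s ↦ (1 - t²) / s` sends this interval onto itself, so the continuous
functional calculus gives `‖1 - ((1 - t²) / c) • x⁻¹‖ ≤ t`. Hence `Δ(x⁻¹) ≤ Δ(x)`, and applying
this to `x⁻¹` gives the reverse inequality. Scalings with `t ≥ 1` are harmless since `Δ ≤ 1`.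
-/

variable {H : Type*} [NormedAddCommGroup H] [InnerProductSpace ℂ H] [CompleteSpace H]

/-- Michelson contrast / centrality measure for operators. -/
noncomputable def Delta (x : H →L[ℂ] H) : ℝ :=
  ⨅ A : {A : ℝ // 0 < A}, ‖(1 : H →L[ℂ] H) - (A.1)⁻¹ • x‖

lemma abs_one_sub_div_le_of_abs_one_sub_le {s t : ℝ} (hs : 0 < s) (ht : t < 1)
    (h : |1 - s| ≤ t) : |1 - (1 - t ^ 2) / s| ≤ t := by
  obtain ⟨h₁, h₂⟩ := abs_le.mp h
  have hupper : (1 - t ^ 2) / s ≤ 1 + t := (div_le_iff₀ hs).mpr (by nlinarith)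
  have hlower : 1 - t ≤ (1 - t ^ 2) / s := (le_div_iff₀ hs).mpr (by nlinarith)
  rw [abs_le]
  constructor <;> linarith

section CStarAlgebra

variable {A : Type*} [CStarAlgebra A] [PartialOrder A] [StarOrderedRing A]

lemma norm_one_sub_smul_ringInverse_le {a : A} (ha : IsStrictlyPositive a) {c t : ℝ}
    (hc : 0 < c) (ht : t < 1) (h : ‖1 - c • a‖ ≤ t) :
    ‖1 - ((1 - t ^ 2) / c) • Ring.inverse a‖ ≤ t := by
  have ht₀ : 0 ≤ t := (norm_nonneg _).trans h
  have hσ : ∀ s ∈ spectrum ℝ a, 0 < s := fun s hs ↦ ha.spectrum_pos hs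
  have hinv : ContinuousOn (·⁻¹) (spectrum ℝ a) :=
    continuousOn_id.inv₀ fun s hs ↦ (hσ s hs).ne'
  have hleft : cfc (fun s : ℝ ↦ 1 - c * s) a = 1 - c • a := by
    rw [cfc_sub .., cfc_const_one .., cfc_const_mul_id ..]
  have hright : cfc (fun s : ℝ ↦ 1 - (1 - t ^ 2) / c * s⁻¹) a =
      1 - ((1 - t ^ 2) / c) • Ring.inverse a := by
    rw [cfc_sub (fun _ ↦ 1) (fun s ↦ (1 - t ^ 2) / c * s⁻¹) a (hg := continuousOn_const.mul hinv),
      cfc_const_one ℝ a, cfc_const_mul _ _ a hinv, cfc_ringInverse_id (R := ℝ) a ha.isUnit]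
  rw [← hleft, norm_cfc_le_iff _ _ ht₀] at h
  rw [← hright, norm_cfc_le_iff _ _ ht₀]
  intro s hs
  have := abs_one_sub_div_le_of_abs_one_sub_le (mul_pos hc (hσ s hs)) ht (h s hs)
  rwa [Real.norm_eq_abs, ← div_eq_mul_inv, div_div]

end CStarAlgebra

section Delta

variable {E : Type*} [NormedAddCommGroup E] [InnerProductSpace ℂ E]

lemma Delta_le (x : E →L[ℂ] E) {A : ℝ} (hA : 0 < A) : Delta x ≤ ‖1 - A⁻¹ • x‖ :=
  ciInf_le ⟨0, by rintro _ ⟨_, rfl⟩; exact norm_nonneg _⟩ (⟨A, hA⟩ : {A : ℝ // 0 < A})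

lemma le_Delta {x : E →L[ℂ] E} {c : ℝ} (h : ∀ A : ℝ, 0 < A → c ≤ ‖1 - A⁻¹ • x‖) :
    c ≤ Delta x :=
  have : Nonempty {A : ℝ // 0 < A} := ⟨⟨1, one_pos⟩⟩
  le_ciInf fun A ↦ h A.1 A.2

lemma Delta_le_one (x : E →L[ℂ] E) : Delta x ≤ 1 := by
  have hlim : Filter.Tendsto (fun s : ℝ ↦ ‖1 - s • x‖) (nhdsWithin 0 (Set.Ioi 0))
      (nhds ‖(1 : E →L[ℂ] E)‖) := by
    have : Continuous (fun s : ℝ ↦ ‖1 - s • x‖) := by fun_prop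
    simpa using this.continuousWithinAt.tendsto (x := 0) (s := Set.Ioi 0)
  have hle : Delta x ≤ ‖(1 : E →L[ℂ] E)‖ := by
    refine ge_of_tendsto hlim (eventually_nhdsWithin_of_forall fun s (hs : 0 < s) ↦ ?_)
    simpa using Delta_le x (inv_pos.mpr hs)
  exact hle.trans ContinuousLinearMap.norm_id_le

lemma Delta_ringInverse_le [CompleteSpace E] {x : E →L[ℂ] E} (hx : IsStrictlyPositive x) :
    Delta (Ring.inverse x) ≤ Delta x := by
  refine le_Delta fun A hA ↦ ?_
  set t := ‖1 - A⁻¹ • x‖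
  rcases le_or_gt 1 t with ht | ht
  · exact (Delta_le_one _).trans ht
  have hr : 0 < (1 - t ^ 2) * A := mul_pos (by nlinarith [norm_nonneg (1 - A⁻¹ • x)]) hA
  calc Delta (Ring.inverse x) ≤ ‖1 - ((1 - t ^ 2) * A)⁻¹⁻¹ • Ring.inverse x‖ :=
        Delta_le _ (inv_pos.mpr hr)
    _ ≤ t := by
      rw [inv_inv, ← div_inv_eq_mul]
      exact norm_one_sub_smul_ringInverse_le hx (inv_pos.mpr hA) ht le_rfl

end Delta

theorem delta_inv (x : H →L[ℂ] H) (hx : x.IsPositive) (h : IsUnit x) :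
    Delta x = Delta (Ring.inverse x) := by
  have hx' : IsStrictlyPositive x :=
    h.isStrictlyPositive ((ContinuousLinearMap.nonneg_iff_isPositive x).mpr hx)
  refine le_antisymm ?_ (Delta_ringInverse_le hx')
  simpa [Ring.inverse_inverse h] using Delta_ringInverse_le hx'.ringInverse
end

section
/- For an invertible positive bounded operator x on a Hilbert space, Δ(x) = 0 if and only if x = ‖x‖·1. -/
/-!
If `‖1 - x / A‖ = d` then `‖x‖ / A` is within `d` of `1`, so `x / A` is within `2d` of
`(‖x‖ / A) • 1`, and after rescaling `‖x - ‖x‖ • 1‖ ≤ (2‖x‖ + ‖x - ‖x‖ • 1‖) · d`.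
Hence `Δ(x) = 0` forces `x = ‖x‖ • 1`. Conversely, if `x = ‖x‖ • 1` is invertible, then either
`x ≠ 0` and `A = ‖x‖` gives `1 - x / A = 0`, or `0 = 1` and all operators vanish.
-/

variable {H : Type*} [NormedAddCommGroup H] [InnerProductSpace ℂ H] [CompleteSpace H]

theorem norm_sub_norm_smul_le_mul_norm_sub_smul {E : Type*} [SeminormedAddCommGroup E]
    [NormedSpace ℝ E] {u : E} (hu : ‖u‖ = 1) (x : E) {t : ℝ} (ht : 0 ≤ t) :
    ‖x - ‖x‖ • u‖ ≤ (2 * ‖x‖ + ‖x - ‖x‖ • u‖) * ‖u - t • x‖ := by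
  set N := ‖x - ‖x‖ • u‖
  set d := ‖u - t • x‖
  have hnorm_tx : ‖t • x‖ = t * ‖x‖ := by rw [norm_smul, Real.norm_of_nonneg ht]
  have hclose : |1 - t * ‖x‖| ≤ d := by
    simpa only [hu, hnorm_tx] using abs_norm_sub_norm_le u (t • x)
  have hscaled : t * N ≤ 2 * d :=
    calc t * N = ‖t • x - (t * ‖x‖) • u‖ := by
          rw [← Real.norm_of_nonneg ht, ← norm_smul, smul_sub, smul_smul, Real.norm_of_nonneg ht]
      _ ≤ ‖t • x - u‖ + ‖u - (t * ‖x‖) • u‖ := norm_sub_le_norm_sub_add_norm_sub _ _ _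
      _ = d + ‖(1 - t * ‖x‖) • u‖ := by rw [norm_sub_rev, sub_smul, one_smul]
      _ = d + |1 - t * ‖x‖| := by rw [norm_smul, Real.norm_eq_abs, hu, mul_one]
      _ ≤ 2 * d := by linarith
  have hN : 0 ≤ N := norm_nonneg _
  calc N = (1 - d) * N + d * N := by ring
    _ ≤ (t * ‖x‖) * N + d * N := by
        gcongr
        linarith [(abs_le.mp hclose).2]
    _ = ‖x‖ * (t * N) + d * N := by ring
    _ ≤ ‖x‖ * (2 * d) + d * N := by gcongr
    _ = (2 * ‖x‖ + N) * d := by ring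

section

omit [CompleteSpace H]

theorem delta_nonneg (x : H →L[ℂ] H) : 0 ≤ Delta x :=
  Real.iInf_nonneg fun _ ↦ norm_nonneg _

theorem delta_le (x : H →L[ℂ] H) {A : ℝ} (hA : 0 < A) : Delta x ≤ ‖1 - A⁻¹ • x‖ :=
  ciInf_le ⟨0, by rintro _ ⟨_, rfl⟩; exact norm_nonneg _⟩ (⟨A, hA⟩ : {A : ℝ // 0 < A})

theorem norm_sub_norm_smul_one_le_mul_delta [Nontrivial H] (x : H →L[ℂ] H) :
    ‖x - ‖x‖ • 1‖ ≤ (2 * ‖x‖ + ‖x - ‖x‖ • 1‖) * Delta x := by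
  rw [Delta, Real.mul_iInf_of_nonneg (by positivity)]
  exact le_ciInf fun A ↦
    norm_sub_norm_smul_le_mul_norm_sub_smul norm_one x (inv_nonneg.mpr A.2.le)

theorem eq_norm_smul_one_of_delta_eq_zero (x : H →L[ℂ] H) (h : Delta x = 0) :
    x = ‖x‖ • 1 := by
  nontriviality H
  rw [← sub_eq_zero, ← norm_le_zero_iff]
  simpa [h] using norm_sub_norm_smul_one_le_mul_delta x

theorem delta_eq_zero_of_eq_norm_smul_one (x : H →L[ℂ] H) (h : IsUnit x)
    (hx : x = ‖x‖ • 1) : Delta x = 0 := by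
  refine le_antisymm ?_ (delta_nonneg x)
  rcases (norm_nonneg x).eq_or_lt with hx0 | hx0
  · have hzero : x = 0 := norm_eq_zero.mp hx0.symm
    have hone : (1 : H →L[ℂ] H) = 0 := (isUnit_zero_iff.mp (hzero ▸ h)).symm
    simpa [hone, hzero] using delta_le x one_pos
  · calc Delta x ≤ ‖1 - ‖x‖⁻¹ • x‖ := delta_le x hx0
      _ = 0 := by
          nth_rewrite 2 [hx]
          rw [smul_smul, inv_mul_cancel₀ hx0.ne', one_smul, sub_self, norm_zero]

end

theorem delta_eq_zero_iff_general (x : H →L[ℂ] H) (h : IsUnit x) :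
    Delta x = 0 ↔ x = ‖x‖ • (1 : H →L[ℂ] H) :=
  ⟨eq_norm_smul_one_of_delta_eq_zero x, delta_eq_zero_of_eq_norm_smul_one x h⟩

theorem delta_eq_zero_iff (x : H →L[ℂ] H) (hx : x.IsPositive) (h : IsUnit x) :
    Delta x = 0 ↔ x = ‖x‖ • (1 : H →L[ℂ] H) :=
  delta_eq_zero_iff_general x h
end

section
/- For any nonzero positive bounded operator x on a Hilbert space, Δ(x) = (sup σ(x) − inf σ(x)) / (sup σ(x) + inf σ(x)), where σ(x) denotes the spectrum of x. -/
/-!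
For self-adjoint `y` in a C⋆-algebra, `‖y‖` is the largest `|t|` with `t ∈ σ(y)`. Since
`σ(1 - A⁻¹x) = 1 - A⁻¹σ(x)` and `t ↦ |1 - A⁻¹t|` is convex,
`‖1 - A⁻¹x‖ = max |1 - m/A| |1 - M/A|` with `m = inf σ(x)`, `M = sup σ(x)`.
Minimising over `A > 0` is elementary: the two terms balance at `A = (M + m)/2`, where both equal
`(M - m)/(M + m)`, and since `0 ≤ m`, the identity `M (1 - m/A) + m (M/A - 1) = M - m` shows
that no `A` does better.
-/

variable {H : Type*} [NormedAddCommGroup H] [InnerProductSpace ℂ H] [CompleteSpace H]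

lemma spectrum_one_sub_smul {𝕜 A : Type*} [Field 𝕜] [Ring A] [Algebra 𝕜 A] [Nontrivial A]
    {a : A} (ha : (spectrum 𝕜 a).Nonempty) (c : 𝕜) :
    spectrum 𝕜 (1 - c • a) = (fun t ↦ 1 - c * t) '' spectrum 𝕜 a := by
  rw [← map_one (algebraMap 𝕜 A), ← spectrum.singleton_sub_eq, spectrum.smul_eq_smul c a ha,
    ← Set.image_smul, Set.singleton_sub, Set.image_image]
  rfl

section CStarAlgebra

variable {A : Type*} [CStarAlgebra A] [Nontrivial A] {a : A}

lemma IsSelfAdjoint.exists_mem_spectrum_abs_eq_norm (ha : IsSelfAdjoint a) :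
    ∃ t ∈ spectrum ℝ a, |t| = ‖a‖ := by
  rcases CStarAlgebra.norm_or_neg_norm_mem_spectrum ha with h | h
  · exact ⟨_, h, abs_norm a⟩
  · exact ⟨_, h, by rw [abs_neg, abs_norm]⟩

lemma IsSelfAdjoint.norm_one_sub_smul (ha : IsSelfAdjoint a) {c : ℝ} (hc : 0 ≤ c) :
    ‖1 - c • a‖ = max |1 - c * sInf (spectrum ℝ a)| |1 - c * sSup (spectrum ℝ a)| := by
  have hne : (spectrum ℝ a).Nonempty := ContinuousFunctionalCalculus.spectrum_nonempty a ha
  have hcpt : IsCompact (spectrum ℝ a) := spectrum.isCompact a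
  have hσ := spectrum_one_sub_smul hne c
  apply le_antisymm
  · have hsa : IsSelfAdjoint (1 - c • a) :=
      (IsSelfAdjoint.one A).sub ((IsSelfAdjoint.all c).smul ha)
    obtain ⟨_, ht, hnorm⟩ := hsa.exists_mem_spectrum_abs_eq_norm
    rw [hσ] at ht
    obtain ⟨t, ht, rfl⟩ := ht
    rw [← hnorm, max_comm]
    exact abs_le_max_abs_abs
      (sub_le_sub_left (mul_le_mul_of_nonneg_left (le_csSup hcpt.bddAbove ht) hc) 1)
      (sub_le_sub_left (mul_le_mul_of_nonneg_left (csInf_le hcpt.bddBelow ht) hc) 1)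
  · have hmem : ∀ t ∈ spectrum ℝ a, |1 - c * t| ≤ ‖1 - c • a‖ := fun t ht ↦ by
      rw [← Real.norm_eq_abs]
      exact spectrum.norm_le_norm_of_mem (hσ ▸ Set.mem_image_of_mem _ ht)
    exact max_le (hmem _ (hcpt.sInf_mem hne)) (hmem _ (hcpt.sSup_mem hne))

end CStarAlgebra

lemma div_le_max_abs_one_sub_mul {m M : ℝ} (hm : 0 ≤ m) (hM : 0 ≤ M) (hmM : 0 < M + m)
    (c : ℝ) : (M - m) / (M + m) ≤ max |1 - c * m| |1 - c * M| := by
  rw [div_le_iff₀ hmM]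
  have h₁ : 1 - c * m ≤ max |1 - c * m| |1 - c * M| := (le_abs_self _).trans (le_max_left _ _)
  have h₂ : -(1 - c * M) ≤ max |1 - c * m| |1 - c * M| :=
    (neg_le_abs _).trans (le_max_right _ _)
  nlinarith [mul_le_mul_of_nonneg_left h₁ hM, mul_le_mul_of_nonneg_left h₂ hm]

lemma max_abs_one_sub_inv_mul_midpoint {m M : ℝ} (hmM : m ≤ M) (h : 0 < M + m) :
    max |1 - ((M + m) / 2)⁻¹ * m| |1 - ((M + m) / 2)⁻¹ * M| = (M - m) / (M + m) := by
  have e₁ : 1 - ((M + m) / 2)⁻¹ * m = (M - m) / (M + m) := by field_simp; ring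
  have e₂ : 1 - ((M + m) / 2)⁻¹ * M = -((M - m) / (M + m)) := by field_simp; ring
  rw [e₁, e₂, abs_neg, max_self, abs_of_nonneg (div_nonneg (sub_nonneg.2 hmM) h.le)]

lemma iInf_max_abs_one_sub_inv_mul {m M : ℝ} (hm : 0 ≤ m) (hmM : m ≤ M) (hM : 0 < M) :
    ⨅ A : {A : ℝ // 0 < A}, max |1 - A.1⁻¹ * m| |1 - A.1⁻¹ * M| = (M - m) / (M + m) := by
  have h : 0 < M + m := by linarith
  refine le_antisymm ?_ (le_ciInf fun A ↦ div_le_max_abs_one_sub_mul hm (hm.trans hmM) h _)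
  refine (ciInf_le ⟨0, ?_⟩ ⟨(M + m) / 2, half_pos h⟩).trans_eq
    (max_abs_one_sub_inv_mul_midpoint hmM h)
  rintro _ ⟨A, rfl⟩
  positivity

theorem delta_eq_spectral_formula (x : H →L[ℂ] H) (hx : x.IsPositive)
    (hne : x ≠ 0) :
    Delta x = (sSup (spectrum ℝ x) - sInf (spectrum ℝ x)) /
      (sSup (spectrum ℝ x) + sInf (spectrum ℝ x)) := by
  have : Nontrivial (H →L[ℂ] H) := nontrivial_of_ne x 0 hne
  have hx₀ : 0 ≤ x := (ContinuousLinearMap.nonneg_iff_isPositive x).2 hx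
  have hσ : (spectrum ℝ x).Nonempty :=
    ContinuousFunctionalCalculus.spectrum_nonempty x hx.isSelfAdjoint
  have hcpt : IsCompact (spectrum ℝ x) := spectrum.isCompact x
  have hm : 0 ≤ sInf (spectrum ℝ x) :=
    le_csInf hσ fun _ ↦ (spectrum_nonneg_of_nonneg hx₀ ·)
  have hM : 0 < sSup (spectrum ℝ x) := (norm_pos_iff.2 hne).trans_le <|
    le_csSup hcpt.bddAbove (CStarAlgebra.norm_mem_spectrum_of_nonneg hx₀)
  calc Delta x
      = ⨅ A : {A : ℝ // 0 < A}, max |1 - A.1⁻¹ * sInf (spectrum ℝ x)|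
          |1 - A.1⁻¹ * sSup (spectrum ℝ x)| :=
        iInf_congr fun A ↦ hx.isSelfAdjoint.norm_one_sub_smul (inv_nonneg.2 A.2.le)
    _ = _ := iInf_max_abs_one_sub_inv_mul hm (csInf_le_csSup hσ hcpt.bddBelow hcpt.bddAbove) hM
end

section
/- For invertible positive bounded operators x and y on a Hilbert space, (‖x+y‖ + 1/‖(x+y)⁻¹‖)·Δ(x+y) ≤ (‖x‖ + 1/‖x⁻¹‖)·Δ(x) + (‖y‖ + 1/‖y⁻¹‖)·Δ(y). -/
variable {H : Type*} [NormedAddCommGroup H] [InnerProductSpace ℂ H] [CompleteSpace H]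

/-
The number `m = ‖x⁻¹‖⁻¹` is the bottom of the spectrum of a strictly positive `x` and `M = ‖x‖`
is its top, so `1 - A⁻¹ • x` has spectrum `{1 - t / A | t ∈ σ(x)}` with extreme points `1 - m / A`
and `1 - M / A`. Its norm is minimised at the midpoint `A = (M + m) / 2`, giving
`Δ(x) = (M - m) / (M + m)`, i.e. `(M + m) Δ(x) = M - m`. The claim then follows from the
subadditivity of `M` (triangle inequality) and the superadditivity of `m`, which holds because
`m` is the largest `r` with `r • 1 ≤ x`.
-/

lemma sub_le_mul_add_of_abs_one_sub_mul_le {m M s c : ℝ} (hm : 0 < m) (hmM : m ≤ M)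
    (hcm : |1 - s * m| ≤ c) (hcM : |1 - s * M| ≤ c) : M - m ≤ c * (M + m) := by
  rw [abs_le] at hcm hcM
  rcases le_total c 1 with hc | hc
  · nlinarith [hcm.2, hcM.1]
  · nlinarith

lemma abs_one_sub_inv_midpoint_mul_le {m M t : ℝ} (hm : 0 < m) (hmt : m ≤ t) (htM : t ≤ M) :
    |1 - ((M + m) / 2)⁻¹ * t| ≤ (M - m) / (M + m) := by
  have hMm : 0 < M + m := by linarith
  have : 1 - ((M + m) / 2)⁻¹ * t = (M + m - 2 * t) / (M + m) := by field_simp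
  rw [this, abs_div, abs_of_pos hMm]
  gcongr
  rw [abs_le]
  constructor <;> linarith

section CStarAlgebra

variable {A : Type*} [CStarAlgebra A]

lemma IsSelfAdjoint.one_sub_smul_eq_cfc {a : A} (ha : IsSelfAdjoint a) (c : ℝ) :
    1 - c • a = cfc (fun t : ℝ ↦ 1 - c * t) a := by
  rw [cfc_sub (fun _ : ℝ ↦ 1) (c * ·) a, cfc_const_one ℝ a, cfc_const_mul_id c a]

lemma IsSelfAdjoint.abs_one_sub_mul_le_norm {a : A} (ha : IsSelfAdjoint a) (c : ℝ) {t : ℝ}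
    (ht : t ∈ spectrum ℝ a) : |1 - c * t| ≤ ‖1 - c • a‖ := by
  rw [ha.one_sub_smul_eq_cfc]
  exact norm_apply_le_norm_cfc (fun t : ℝ ↦ 1 - c * t) a ht

lemma IsSelfAdjoint.norm_one_sub_smul_le {a : A} (ha : IsSelfAdjoint a) (c : ℝ) {r : ℝ}
    (hr : 0 ≤ r) (h : ∀ t ∈ spectrum ℝ a, |1 - c * t| ≤ r) : ‖1 - c • a‖ ≤ r := by
  rw [ha.one_sub_smul_eq_cfc]
  exact norm_cfc_le hr h

variable [PartialOrder A] [StarOrderedRing A] {x y : A}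

namespace IsStrictlyPositive

lemma inv_mem_spectrum_ringInverse (hx : IsStrictlyPositive x) {t : ℝ}
    (ht : t ∈ spectrum ℝ x) : t⁻¹ ∈ spectrum ℝ (Ring.inverse x) := by
  lift x to Aˣ using hx.isUnit
  have ht' : ((Units.mk0 t (hx.spectrum_pos ht).ne' : ℝˣ) : ℝ) ∈ spectrum ℝ (x : A) := ht
  simpa [Ring.inverse_unit] using spectrum.inv_mem_iff.mp ht'

lemma norm_ringInverse_inv_le [Nontrivial A] (hx : IsStrictlyPositive x) {t : ℝ}
    (ht : t ∈ spectrum ℝ x) : ‖Ring.inverse x‖⁻¹ ≤ t := by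
  have ht_pos : 0 < t := hx.spectrum_pos ht
  have h : t⁻¹ ≤ ‖Ring.inverse x‖ := (Real.le_norm_self _).trans
    (spectrum.norm_le_norm_of_mem (hx.inv_mem_spectrum_ringInverse ht))
  exact (inv_le_comm₀ ((inv_pos.mpr ht_pos).trans_le h) ht_pos).mpr h

lemma norm_ringInverse_inv_mem_spectrum [Nontrivial A] (hx : IsStrictlyPositive x) :
    ‖Ring.inverse x‖⁻¹ ∈ spectrum ℝ x := by
  have h := hx.ringInverse.inv_mem_spectrum_ringInverse
    (CStarAlgebra.norm_mem_spectrum_of_nonneg hx.ringInverse.nonneg)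
  rwa [Ring.inverse_inverse hx.isUnit] at h

lemma algebraMap_le_iff_le_norm_ringInverse_inv [Nontrivial A] (hx : IsStrictlyPositive x)
    {r : ℝ} : algebraMap ℝ A r ≤ x ↔ r ≤ ‖Ring.inverse x‖⁻¹ := by
  rw [algebraMap_le_iff_le_spectrum hx.isSelfAdjoint]
  exact ⟨fun h ↦ h _ hx.norm_ringInverse_inv_mem_spectrum,
    fun h t ht ↦ h.trans (hx.norm_ringInverse_inv_le ht)⟩

lemma norm_ringInverse_inv_add_le (hx : IsStrictlyPositive x) (hy : IsStrictlyPositive y) :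
    ‖Ring.inverse x‖⁻¹ + ‖Ring.inverse y‖⁻¹ ≤ ‖Ring.inverse (x + y)‖⁻¹ := by
  nontriviality A
  rw [← (hx.add_nonneg hy.nonneg).algebraMap_le_iff_le_norm_ringInverse_inv, map_add]
  exact add_le_add (hx.algebraMap_le_iff_le_norm_ringInverse_inv.mpr le_rfl)
    (hy.algebraMap_le_iff_le_norm_ringInverse_inv.mpr le_rfl)

end IsStrictlyPositive

end CStarAlgebra

lemma delta_eq_sub_div_add {z : H →L[ℂ] H} [Nontrivial (H →L[ℂ] H)]
    (hz : IsStrictlyPositive z) :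
    Delta z = (‖z‖ - ‖Ring.inverse z‖⁻¹) / (‖z‖ + ‖Ring.inverse z‖⁻¹) := by
  set M := ‖z‖
  set m := ‖Ring.inverse z‖⁻¹
  have hm_mem : m ∈ spectrum ℝ z := hz.norm_ringInverse_inv_mem_spectrum
  have hM_mem : M ∈ spectrum ℝ z := CStarAlgebra.norm_mem_spectrum_of_nonneg hz.nonneg
  have hm_le : ∀ t ∈ spectrum ℝ z, m ≤ t := fun t ht ↦ hz.norm_ringInverse_inv_le ht
  have hle_M : ∀ t ∈ spectrum ℝ z, t ≤ M := fun t ht ↦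
    (Real.le_norm_self t).trans (spectrum.norm_le_norm_of_mem ht)
  have hm : 0 < m := hz.spectrum_pos hm_mem
  have hmM : m ≤ M := hle_M m hm_mem
  apply le_antisymm
  · have hbdd : BddBelow
        (Set.range fun A : {A : ℝ // 0 < A} ↦ ‖(1 : H →L[ℂ] H) - A.1⁻¹ • z‖) :=
      ⟨0, by rintro _ ⟨A, rfl⟩; exact norm_nonneg _⟩
    refine (ciInf_le hbdd ⟨(M + m) / 2, by positivity⟩).trans ?_
    exact hz.isSelfAdjoint.norm_one_sub_smul_le _ (div_nonneg (by linarith) (by positivity))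
      fun t ht ↦ abs_one_sub_inv_midpoint_mul_le hm (hm_le t ht) (hle_M t ht)
  · refine le_ciInf fun A ↦ ?_
    rw [div_le_iff₀ (by positivity)]
    exact sub_le_mul_add_of_abs_one_sub_mul_le hm hmM
      (hz.isSelfAdjoint.abs_one_sub_mul_le_norm _ hm_mem)
      (hz.isSelfAdjoint.abs_one_sub_mul_le_norm _ hM_mem)

lemma add_mul_delta_eq {z : H →L[ℂ] H} (hz : IsStrictlyPositive z) :
    (‖z‖ + ‖Ring.inverse z‖⁻¹) * Delta z = ‖z‖ - ‖Ring.inverse z‖⁻¹ := by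
  nontriviality H →L[ℂ] H
  have hm : 0 < ‖Ring.inverse z‖⁻¹ := hz.spectrum_pos hz.norm_ringInverse_inv_mem_spectrum
  rw [delta_eq_sub_div_add hz, mul_div_cancel₀]
  positivity

theorem delta_add_weighted (x y : H →L[ℂ] H) (hx : x.IsPositive) (hy : y.IsPositive)
    (hux : IsUnit x) (huy : IsUnit y) :
    (‖x + y‖ + ‖Ring.inverse (x + y)‖⁻¹) * Delta (x + y) ≤
      (‖x‖ + ‖Ring.inverse x‖⁻¹) * Delta x + (‖y‖ + ‖Ring.inverse y‖⁻¹) * Delta y := by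
  have hx' : IsStrictlyPositive x :=
    hux.isStrictlyPositive ((ContinuousLinearMap.nonneg_iff_isPositive x).mpr hx)
  have hy' : IsStrictlyPositive y :=
    huy.isStrictlyPositive ((ContinuousLinearMap.nonneg_iff_isPositive y).mpr hy)
  rw [add_mul_delta_eq hx', add_mul_delta_eq hy', add_mul_delta_eq (hx'.add_nonneg hy'.nonneg)]
  linarith [norm_add_le x y, hx'.norm_ringInverse_inv_add_le hy']
end

section
/- For any two positive semidefinite 2×2 complex matrices X and Y, Δ(X+Y) ≤ max(Δ(X), Δ(Y)), where for a positive semidefinite matrix A with eigenvalues t₁ ≥ t₂ ≥ 0 (not both zero) Δ(A) = (t₁ − t₂)/(t₁ + t₂) and Δ(0) = 1. -/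
/-!
For a positive semidefinite 2×2 matrix `A` the two eigenvalues add up to `t(A) = tr A`, so
`Δ(A) = 1 - 2 λ_min(A) / t(A)`. The trace is additive, and `λ_min` is superadditive because
`λ_min(A) • 1 ≤ A` in the Loewner order. Hence `λ_min(X + Y) / t(X + Y)` is at least the mediant
`(λ_min X + λ_min Y) / (t X + t Y)`, which is at least the smaller of `λ_min X / t X` and
`λ_min Y / t Y`.
-/
open scoped ComplexOrder

/-- Michelson contrast of a Hermitian matrix, via its eigenvalues;
by convention `DeltaM 0 = 1`. -/
noncomputable def DeltaM {n : ℕ} (A : Matrix (Fin n) (Fin n) ℂ)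
    (hA : A.IsHermitian) : ℝ :=
  if A = 0 then 1 else
    ((⨆ i, hA.eigenvalues i) - ⨅ i, hA.eigenvalues i) /
      ((⨆ i, hA.eigenvalues i) + ⨅ i, hA.eigenvalues i)

theorem min_div_le_add_div_add {α : Type*} [Field α] [LinearOrder α] [IsStrictOrderedRing α]
    {a b c d : α} (ha : 0 ≤ a) (hb : 0 ≤ b) (hc : 0 ≤ c) (hd : 0 ≤ d) :
    min (a / b) (c / d) ≤ (a + c) / (b + d) := by
  set k := min (a / b) (c / d)
  have scaled_le {x y : α} (hx : 0 ≤ x) (hy : 0 ≤ y) (hk : k ≤ x / y) : k * y ≤ x := by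
    rcases hy.eq_or_lt with rfl | hy
    · simpa using hx
    · exact (le_div_iff₀ hy).mp hk
  rcases (add_nonneg hb hd).eq_or_lt with hbd | hbd
  · have hb0 : b = 0 := by linarith
    have hd0 : d = 0 := by linarith
    simp [k, hb0, hd0]
  · rw [le_div_iff₀ hbd, mul_add]
    exact add_le_add (scaled_le ha hb (min_le_left _ _)) (scaled_le hc hd (min_le_right _ _))

theorem ciSup_add_ciInf_fin_two (f : Fin 2 → ℝ) : (⨆ i, f i) + ⨅ i, f i = f 0 + f 1 := by
  have hsup : (⨆ i, f i) = max (f 0) (f 1) :=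
    le_antisymm (ciSup_le (Fin.forall_fin_two.2 ⟨le_max_left _ _, le_max_right _ _⟩))
      (max_le (le_ciSup (Finite.bddAbove_range f) 0) (le_ciSup (Finite.bddAbove_range f) 1))
  have hinf : (⨅ i, f i) = min (f 0) (f 1) :=
    le_antisymm
      (le_min (ciInf_le (Finite.bddBelow_range f) 0) (ciInf_le (Finite.bddBelow_range f) 1))
      (le_ciInf (Fin.forall_fin_two.2 ⟨min_le_left _ _, min_le_right _ _⟩))
  rw [hsup, hinf, max_add_min]

namespace Matrix

variable {𝕜 n : Type*} [RCLike 𝕜] [Fintype n]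

theorem PosSemidef.re_trace_nonneg {A : Matrix n n 𝕜} (hA : A.PosSemidef) :
    0 ≤ RCLike.re A.trace :=
  (RCLike.nonneg_iff.1 hA.trace_nonneg).1

theorem PosSemidef.re_trace_eq_zero_iff {A : Matrix n n 𝕜} (hA : A.PosSemidef) :
    RCLike.re A.trace = 0 ↔ A = 0 := by
  rw [← hA.trace_eq_zero_iff, RCLike.ext_iff (z := A.trace),
    (RCLike.nonneg_iff.1 hA.trace_nonneg).2]
  simp

variable [DecidableEq n]

open scoped MatrixOrder in
theorem IsHermitian.algebraMap_le_iff_le_eigenvalues {A : Matrix n n 𝕜} (hA : A.IsHermitian)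
    (r : ℝ) : algebraMap ℝ (Matrix n n 𝕜) r ≤ A ↔ ∀ i, r ≤ hA.eigenvalues i := by
  rw [algebraMap_le_iff_le_spectrum hA.isSelfAdjoint, hA.spectrum_real_eq_range_eigenvalues,
    Set.forall_mem_range]

open scoped MatrixOrder in
theorem IsHermitian.iInf_eigenvalues_add_le [Nonempty n] {A B : Matrix n n 𝕜}
    (hA : A.IsHermitian) (hB : B.IsHermitian) :
    (⨅ i, hA.eigenvalues i) + ⨅ i, hB.eigenvalues i ≤ ⨅ i, (hA.add hB).eigenvalues i := by
  have hA' := (hA.algebraMap_le_iff_le_eigenvalues _).2 (ciInf_le (Finite.bddBelow_range _))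
  have hB' := (hB.algebraMap_le_iff_le_eigenvalues _).2 (ciInf_le (Finite.bddBelow_range _))
  have hsum := add_le_add hA' hB'
  rw [← map_add, (hA.add hB).algebraMap_le_iff_le_eigenvalues] at hsum
  exact le_ciInf hsum

theorem IsHermitian.ciSup_add_ciInf_eigenvalues_fin_two {A : Matrix (Fin 2) (Fin 2) 𝕜}
    (hA : A.IsHermitian) :
    (⨆ i, hA.eigenvalues i) + ⨅ i, hA.eigenvalues i = RCLike.re A.trace := by
  rw [ciSup_add_ciInf_fin_two, hA.trace_eq_sum_eigenvalues, Fin.sum_univ_two]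
  simp

end Matrix

open Matrix

theorem deltaM_eq_one_sub_two_mul_div {A : Matrix (Fin 2) (Fin 2) ℂ} (hA : A.PosSemidef) :
    DeltaM A hA.1 = 1 - 2 * ((⨅ i, hA.1.eigenvalues i) / RCLike.re A.trace) := by
  unfold DeltaM
  split_ifs with h0
  -- at `A = 0` the right-hand side is `1 - 2 * (0 / 0) = 1`
  · simp [h0]
  · have ht : RCLike.re A.trace ≠ 0 := mt hA.re_trace_eq_zero_iff.1 h0
    rw [← hA.1.ciSup_add_ciInf_eigenvalues_fin_two] at ht ⊢
    field_simp
    ring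

theorem deltaM_add_le_max_two (X Y : Matrix (Fin 2) (Fin 2) ℂ)
    (hX : X.PosSemidef) (hY : Y.PosSemidef) :
    DeltaM (X + Y) (hX.1.add hY.1) ≤ max (DeltaM X hX.1) (DeltaM Y hY.1) := by
  rw [deltaM_eq_one_sub_two_mul_div (hX.add hY), deltaM_eq_one_sub_two_mul_div hX,
    deltaM_eq_one_sub_two_mul_div hY, trace_add, map_add]
  have hmin_mono := div_le_div_of_nonneg_right (hX.1.iInf_eigenvalues_add_le hY.1)
    (add_nonneg hX.re_trace_nonneg hY.re_trace_nonneg)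
  have hmediant := min_div_le_add_div_add (le_ciInf hX.eigenvalues_nonneg) hX.re_trace_nonneg
    (le_ciInf hY.eigenvalues_nonneg) hY.re_trace_nonneg
  rcases min_le_iff.1 (hmediant.trans hmin_mono) with h | h
  · exact le_max_of_le_left (by linarith)
  · exact le_max_of_le_right (by linarith)
end

section
/- For any two positive semidefinite n×n complex matrices X and Y, Δ(X+Y) ≤ max(Δ(X), Δ(Y)), where Δ(A) = (λ_max(A) − λ_min(A))/(λ_max(A) + λ_min(A)) for nonzero positive semidefinite A, with λ_max, λ_min the largest and smallest eigenvalues, and Δ(0) = 1. -/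
/-!
Writing `M` and `m` for the extreme eigenvalues, `λ_max A ≤ r ↔ A ≤ r • 1` and
`r ≤ λ_min A ↔ r • 1 ≤ A` in the Loewner order, so both are additive in the right direction:
`λ_max (X + Y) ≤ M_X + M_Y` and `m_X + m_Y ≤ λ_min (X + Y)`. The contrast `(M - m) / (M + m)`
increases with `M` and decreases with `m`, and the contrast of `(M_X + M_Y, m_X + m_Y)` is a
mediant of the contrasts of `X` and `Y`, hence at most their maximum.
-/

open scoped ComplexOrder

section Contrast

variable {α : Type*} [Field α] [LinearOrder α] [IsStrictOrderedRing α]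

theorem add_div_add_le_max {a b c d : α} (hc : 0 < c) (hd : 0 < d) :
    (a + b) / (c + d) ≤ max (a / c) (b / d) := by
  have hac : a ≤ max (a / c) (b / d) * c := (div_le_iff₀ hc).1 (le_max_left _ _)
  have hbd : b ≤ max (a / c) (b / d) * d := (div_le_iff₀ hd).1 (le_max_right _ _)
  rw [div_le_iff₀ (add_pos hc hd), mul_add]
  exact add_le_add hac hbd

def contrast (M m : α) : α := (M - m) / (M + m)

theorem contrast_le_contrast {M m S s : α} (hm : 0 ≤ m) (hms : m ≤ s) (hS : 0 < S)
    (hSM : S ≤ M) : contrast S s ≤ contrast M m := by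
  have hSm : S * m ≤ M * s :=
    (mul_le_mul_of_nonneg_right hSM hm).trans (mul_le_mul_of_nonneg_left hms (hS.le.trans hSM))
  rw [contrast, contrast, div_le_div_iff₀ (by linarith) (by linarith)]
  linarith

theorem contrast_add_le_max {M₁ m₁ M₂ m₂ : α} (h₁ : 0 < M₁ + m₁) (h₂ : 0 < M₂ + m₂) :
    contrast (M₁ + M₂) (m₁ + m₂) ≤ max (contrast M₁ m₁) (contrast M₂ m₂) := by
  rw [contrast, add_sub_add_comm, add_add_add_comm]
  exact add_div_add_le_max h₁ h₂

end Contrast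

open scoped MatrixOrder

namespace Matrix

variable {𝕜 n : Type*} [RCLike 𝕜] [Fintype n] [DecidableEq n] {A B : Matrix n n 𝕜}

namespace IsHermitian

variable [Nonempty n]

theorem iSup_eigenvalues_le_iff (hA : A.IsHermitian) {r : ℝ} :
    ⨆ i, hA.eigenvalues i ≤ r ↔ A ≤ algebraMap ℝ (Matrix n n 𝕜) r := by
  rw [ciSup_le_iff (Set.finite_range _).bddAbove, le_algebraMap_iff_spectrum_le hA,
    hA.spectrum_real_eq_range_eigenvalues, Set.forall_mem_range]

theorem le_iInf_eigenvalues_iff (hA : A.IsHermitian) {r : ℝ} :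
    r ≤ ⨅ i, hA.eigenvalues i ↔ algebraMap ℝ (Matrix n n 𝕜) r ≤ A := by
  rw [le_ciInf_iff (Set.finite_range _).bddBelow, algebraMap_le_iff_le_spectrum hA,
    hA.spectrum_real_eq_range_eigenvalues, Set.forall_mem_range]

theorem iSup_eigenvalues_add_le (hA : A.IsHermitian) (hB : B.IsHermitian) :
    ⨆ i, (hA.add hB).eigenvalues i ≤ (⨆ i, hA.eigenvalues i) + ⨆ i, hB.eigenvalues i := by
  rw [iSup_eigenvalues_le_iff, map_add]
  exact add_le_add ((iSup_eigenvalues_le_iff hA).1 le_rfl) ((iSup_eigenvalues_le_iff hB).1 le_rfl)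

theorem iInf_eigenvalues_add_le_s15 (hA : A.IsHermitian) (hB : B.IsHermitian) :
    (⨅ i, hA.eigenvalues i) + (⨅ i, hB.eigenvalues i) ≤ ⨅ i, (hA.add hB).eigenvalues i := by
  rw [le_iInf_eigenvalues_iff, map_add]
  exact add_le_add ((le_iInf_eigenvalues_iff hA).1 le_rfl) ((le_iInf_eigenvalues_iff hB).1 le_rfl)

end IsHermitian

theorem PosSemidef.iSup_eigenvalues_pos (hA : A.PosSemidef) (h : A ≠ 0) :
    0 < ⨆ i, hA.1.eigenvalues i := by
  obtain ⟨i, hi⟩ := Function.ne_iff.1 (mt hA.1.eigenvalues_eq_zero_iff.1 h)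
  exact ((hA.eigenvalues_nonneg i).lt_of_ne' hi).trans_le
    (le_ciSup (Set.finite_range _).bddAbove i)

end Matrix

theorem deltaM_of_ne_zero {n : ℕ} {A : Matrix (Fin n) (Fin n) ℂ} (hA : A.IsHermitian)
    (h : A ≠ 0) :
    DeltaM A hA = contrast (⨆ i, hA.eigenvalues i) (⨅ i, hA.eigenvalues i) :=
  if_neg h

theorem deltaM_add_le_max (n : ℕ) (X Y : Matrix (Fin n) (Fin n) ℂ)
    (hX : X.PosSemidef) (hY : Y.PosSemidef) :
    DeltaM (X + Y) (hX.1.add hY.1) ≤ max (DeltaM X hX.1) (DeltaM Y hY.1) := by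
  by_cases hX0 : X = 0
  · subst hX0
    exact le_max_of_le_right (le_of_eq (by congr 1; exact zero_add Y))
  by_cases hY0 : Y = 0
  · subst hY0
    exact le_max_of_le_left (le_of_eq (by congr 1; exact add_zero X))
  have hXY : X + Y ≠ 0 := fun h => hX0 ((add_eq_zero_iff_of_nonneg hX.nonneg hY.nonneg).1 h).1
  have : Nonempty (Fin n) := by
    by_contra hn
    exact hX0 (by ext i; exact (not_nonempty_iff.1 hn).elim i)
  rw [deltaM_of_ne_zero _ hXY, deltaM_of_ne_zero _ hX0, deltaM_of_ne_zero _ hY0]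
  have hmX := Real.iInf_nonneg hX.eigenvalues_nonneg
  have hmY := Real.iInf_nonneg hY.eigenvalues_nonneg
  calc _ ≤ contrast ((⨆ i, hX.1.eigenvalues i) + ⨆ i, hY.1.eigenvalues i)
        ((⨅ i, hX.1.eigenvalues i) + ⨅ i, hY.1.eigenvalues i) :=
        contrast_le_contrast (add_nonneg hmX hmY) (hX.1.iInf_eigenvalues_add_le_s15 hY.1)
          ((hX.add hY).iSup_eigenvalues_pos hXY) (hX.1.iSup_eigenvalues_add_le hY.1)
    _ ≤ _ := contrast_add_le_max (add_pos_of_pos_of_nonneg (hX.iSup_eigenvalues_pos hX0) hmX)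
        (add_pos_of_pos_of_nonneg (hY.iSup_eigenvalues_pos hY0) hmY)
end

section
/- For any two positive bounded operators x and y on a Hilbert space, Δ(x+y) ≤ max(Δ(x), Δ(y)). -/
/-! Take scales `a` and `b` nearly optimal for `x` and `y`; then `a + b` does as well for `x + y`,
since `1 - (a + b)⁻¹ • (x + y)` is the convex combination of `1 - a⁻¹ • x` and `1 - b⁻¹ • y`
with weights `a / (a + b)` and `b / (a + b)`, and the norm of a convex combination is at most
the larger of the two norms. -/

variable {H : Type*} [NormedAddCommGroup H] [InnerProductSpace ℂ H] [CompleteSpace H]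

lemma norm_sub_inv_smul_add_le_max {V : Type*} [SeminormedAddCommGroup V] [NormedSpace ℝ V]
    (u v w : V) {a b : ℝ} (ha : 0 < a) (hb : 0 < b) :
    ‖u - (a + b)⁻¹ • (v + w)‖ ≤ max ‖u - a⁻¹ • v‖ ‖u - b⁻¹ • w‖ := by
  have hab : 0 < a + b := add_pos ha hb
  refine (convexOn_norm convex_univ).le_max_of_mem_segment trivial trivial
    ⟨a / (a + b), b / (a + b), by positivity, by positivity, by field_simp, ?_⟩
  match_scalars <;> field_simp

section Delta

variable {E : Type*} [NormedAddCommGroup E] [InnerProductSpace ℂ E]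

lemma delta_le_norm_one_sub_inv_smul (x : E →L[ℂ] E) {a : ℝ} (ha : 0 < a) :
    Delta x ≤ ‖(1 : E →L[ℂ] E) - a⁻¹ • x‖ :=
  ciInf_le ⟨0, Set.forall_mem_range.2 fun _ => norm_nonneg _⟩ (⟨a, ha⟩ : {A : ℝ // 0 < A})

lemma exists_norm_one_sub_inv_smul_lt_of_delta_lt {x : E →L[ℂ] E} {c : ℝ} (hc : Delta x < c) :
    ∃ a : ℝ, 0 < a ∧ ‖(1 : E →L[ℂ] E) - a⁻¹ • x‖ < c := by
  obtain ⟨⟨a, ha⟩, hac⟩ := exists_lt_of_ciInf_lt hc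
  exact ⟨a, ha, hac⟩

end Delta

theorem delta_add_le_max_general (x y : H →L[ℂ] H) :
    Delta (x + y) ≤ max (Delta x) (Delta y) := by
  refine le_of_forall_gt fun c hc => ?_
  obtain ⟨a, ha, hxa⟩ :=
    exists_norm_one_sub_inv_smul_lt_of_delta_lt ((le_max_left _ _).trans_lt hc)
  obtain ⟨b, hb, hyb⟩ :=
    exists_norm_one_sub_inv_smul_lt_of_delta_lt ((le_max_right _ _).trans_lt hc)
  calc Delta (x + y) ≤ ‖(1 : H →L[ℂ] H) - (a + b)⁻¹ • (x + y)‖ :=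
        delta_le_norm_one_sub_inv_smul _ (add_pos ha hb)
    _ ≤ max ‖(1 : H →L[ℂ] H) - a⁻¹ • x‖ ‖(1 : H →L[ℂ] H) - b⁻¹ • y‖ :=
        norm_sub_inv_smul_add_le_max _ _ _ ha hb
    _ < c := max_lt hxa hyb

theorem delta_add_le_max (x y : H →L[ℂ] H) (hx : x.IsPositive) (hy : y.IsPositive) :
    Delta (x + y) ≤ max (Delta x) (Delta y) :=
  delta_add_le_max_general x y
end
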